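/- If all examples (x,y) of a dataset satisfy ‖x‖ ≤ R, and a perceptron run starting from initial vector w0 makes k mistake updates, then the final iterate w satisfies ‖w‖² ≤ ‖w0‖² + R²·k. -/
import Mathlib


open scoped RealInnerProductSpace

/-- Perceptron norm-growth bound: along a run of `k` mistake updates on data
of radius `R`, `‖w_k‖² ≤ ‖w_0‖² + R²·k`. -/
theorem perceptron_norm_growth {D : ℕ}
    (R : ℝ) (hR : 0 < R)
    (k : ℕ) (v : ℕ → EuclideanSpace ℝ (Fin D))
    (ex : ℕ → (EuclideanSpace ℝ (Fin D)) × ℝ)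
    (hlab : ∀ p < k, (ex p).2 = 1 ∨ (ex p).2 = -1)
    (hrad : ∀ p < k, ‖(ex p).1‖ ≤ R)
    (hmis : ∀ p < k, (ex p).2 * ⟪v p, (ex p).1⟫ ≤ 0)
    (hupd : ∀ p < k, v (p + 1) = v p + (ex p).2 • (ex p).1) :
    ‖v k‖ ^ 2 ≤ ‖v 0‖ ^ 2 + R ^ 2 * k := by
  suffices h : ∀ n ≤ k, ‖v n‖ ^ 2 ≤ ‖v 0‖ ^ 2 + R ^ 2 * n from h k le_rfl
  intro n hn
  induction n with
  | zero => simp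
  | succ p ih =>
    have hp : p < k := hn
    have key : ‖v (p + 1)‖ ^ 2 ≤ ‖v p‖ ^ 2 + R ^ 2 := by
      rw [hupd p hp]
      have expand : ‖v p + (ex p).2 • (ex p).1‖ ^ 2
          = ‖v p‖ ^ 2 + 2 * ((ex p).2 * ⟪v p, (ex p).1⟫) + (ex p).2 ^ 2 * ‖(ex p).1‖ ^ 2 := by
        rw [@norm_add_sq_real]
        rw [real_inner_smul_right, norm_smul]
        ring_nf
        simp [mul_pow]
      rw [expand]
      have h1 : 2 * ((ex p).2 * ⟪v p, (ex p).1⟫) ≤ 0 := by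
        have := hmis p hp; linarith
      have h2 : (ex p).2 ^ 2 = 1 := by
        rcases hlab p hp with h | h <;> rw [h] <;> norm_num
      have h3 : ‖(ex p).1‖ ^ 2 ≤ R ^ 2 := by
        have := hrad p hp
        have := norm_nonneg (ex p).1
        nlinarith
      rw [h2, one_mul]
      linarith
    
    push_cast
    have := ih (Nat.le_of_lt hp)
    push_cast at this
    linarith
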